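/- arXiv:1510.08257 — 4 statements merged into one kernel-verified Lean document; each statement's English description precedes it below -/
import Mathlib

section
/- With notation as above, for δv, δw ∈ T_{[ψ]} (i.e. ⟨ψ,δv⟩ = ⟨ψ,δw⟩ = 0), the pullback of the Hermitean form under the transition derivative is given by the local formula: 2⟨D_v κ_{ψψ'}(δv), D_v κ_{ψψ'}(δw)⟩ = 2( (1+‖v‖²)⁻¹ ⟨δv, δw⟩ − (1+‖v‖²)⁻² ⟨δv, v⟩⟨v, δw⟩ ). -/
open scoped ComplexInnerProductSpace

/-- Local coordinate formula for the Hermitean form on projective space: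
the pullback of `H(a,b) = 2⟨a,b⟩` under the transition derivative
`D_v κ_{ψψ'}` is given by the Fubini–Study expression. -/
theorem hermitean_form_local_formula
    {V : Type*} [NormedAddCommGroup V] [InnerProductSpace ℂ V]
    (ψ v δv δw : V) (hψ : ‖ψ‖ = 1) (hv : ⟪ψ, v⟫ = 0)
    (hδv : ⟪ψ, δv⟫ = 0) (hδw : ⟪ψ, δw⟫ = 0) :
    (2 : ℂ) * ⟪(‖ψ + v‖)⁻¹ • (δv - (⟪(‖ψ + v‖)⁻¹ • (ψ + v), δv⟫) • ((‖ψ + v‖)⁻¹ • (ψ + v))),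
               (‖ψ + v‖)⁻¹ • (δw - (⟪(‖ψ + v‖)⁻¹ • (ψ + v), δw⟫) • ((‖ψ + v‖)⁻¹ • (ψ + v)))⟫
      = 2 * (((1 + ‖v‖ ^ 2 : ℝ) : ℂ)⁻¹ * ⟪δv, δw⟫
          - (((1 + ‖v‖ ^ 2 : ℝ) : ℂ))⁻¹ ^ 2 * (⟪δv, v⟫ * ⟪v, δw⟫)) := by
  have hn2 : ‖ψ + v‖ ^ 2 = 1 + ‖v‖ ^ 2 := by
    rw [norm_add_sq (𝕜 := ℂ), hψ, hv]
    norm_num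
  have hn0 : ‖ψ + v‖ ≠ 0 := by
    intro h; rw [h] at hn2; norm_num at hn2; nlinarith [sq_nonneg ‖v‖]
  have h1 : ⟪ψ + v, δv⟫ = ⟪v, δv⟫ := by simp [inner_add_left, hδv]
  have h2 : ⟪ψ + v, δw⟫ = ⟪v, δw⟫ := by simp [inner_add_left, hδw]
  have h3' : ⟪δv, ψ⟫ = 0 := by rw [← inner_conj_symm, hδv]; simp
  have h3 : ⟪δv, ψ + v⟫ = ⟪δv, v⟫ := by simp [inner_add_right, h3']
  have h4 : ⟪ψ + v, ψ + v⟫ = ((1 + ‖v‖ ^ 2 : ℝ) : ℂ) := by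
    rw [inner_self_eq_norm_sq_to_K]; norm_cast; exact congrArg _ hn2
  have hc0 : ((‖ψ + v‖ : ℂ)) ≠ 0 := by exact_mod_cast hn0
  have hc20 : ((1 + ‖v‖ ^ 2 : ℝ) : ℂ) ≠ 0 := by
    rw [← hn2]; push_cast; exact pow_ne_zero 2 hc0
  have hs : ∀ x : V, (‖ψ + v‖)⁻¹ • x = ((‖ψ + v‖ : ℂ))⁻¹ • x := fun x => by
    rw [← algebraMap_smul ℂ ((‖ψ + v‖)⁻¹) x, Complex.coe_algebraMap, Complex.ofReal_inv]
  simp only [hs, inner_smul_left, inner_smul_right, inner_sub_left, inner_sub_right,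
    h1, h2, h3, h4, Complex.conj_ofReal, map_inv₀]
  have hsq : ((‖ψ + v‖ : ℂ))^2 = ((1 + ‖v‖ ^ 2 : ℝ) : ℂ) := by
    rw [← hn2]; push_cast; ring
  rw [← hsq]
  field_simp
  ring
end

section
/- For a unit vector ψ and tangent vectors δv, δw with Re⟨ψ,δv⟩ = Re⟨ψ,δw⟩ = 0, the exterior derivative of α in local coordinates at v = 0 satisfies dα(δv, δw) = ∂_{δv}[Im⟨v,δw⟩/(1+‖v‖²)] − ∂_{δw}[Im⟨v,δv⟩/(1+‖v‖²)] evaluated at v = 0, which equals 2 Im⟨δv, δw⟩. -/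
open scoped ComplexInnerProductSpace

/-!
Since `‖v‖² = o(v)`, the weight `(1 + ‖v‖²)⁻¹` has zero derivative at the origin, so at `v = 0`
each term is differentiated as the real-linear map `v ↦ Im⟪v, w⟫`. The two resulting terms
`Im⟪δv, δw⟫` and `-Im⟪δw, δv⟫` agree because `Im⟪·, ·⟫` is antisymmetric.
-/

theorem hasFDerivAt_norm_sq_zero {E : Type*} [NormedAddCommGroup E] [NormedSpace ℝ E] :
    HasFDerivAt (fun v : E => ‖v‖ ^ 2) (0 : E →L[ℝ] ℝ) 0 := by
  rw [hasFDerivAt_iff_isLittleO_nhds_zero]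
  simpa using Asymptotics.isLittleO_norm_pow_id (E' := E) one_lt_two

theorem hasFDerivAt_inv_one_add_norm_sq_mul_zero {E : Type*} [NormedAddCommGroup E]
    [NormedSpace ℝ E] {f : E → ℝ} {L : E →L[ℝ] ℝ} (hf : HasFDerivAt f L 0) :
    HasFDerivAt (fun v => (1 + ‖v‖ ^ 2)⁻¹ * f v) L 0 := by
  have hweight : HasFDerivAt (fun v : E => (1 + ‖v‖ ^ 2)⁻¹) (0 : E →L[ℝ] ℝ) 0 := by
    simpa [Function.comp_def] using (hasFDerivAt_inv (by simp)).comp 0 (hasFDerivAt_norm_sq_zero.const_add (1 : ℝ))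
  simpa using hweight.fun_mul hf

theorem Complex.im_inner_symm {V : Type*} [NormedAddCommGroup V] [InnerProductSpace ℂ V]
    (x y : V) : (⟪x, y⟫).im = -(⟪y, x⟫).im :=
  inner_im_symm (𝕜 := ℂ) x y

theorem hasFDerivAt_im_inner_left {V : Type*} [NormedAddCommGroup V] [InnerProductSpace ℂ V]
    (w x : V) :
    HasFDerivAt (fun v : V => (⟪v, w⟫).im)
      (-(Complex.imCLM ∘L (innerSL ℂ w).restrictScalars ℝ)) x := by
  convert (-(Complex.imCLM ∘L (innerSL ℂ w).restrictScalars ℝ)).hasFDerivAt using 1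
  ext v
  simp [Complex.im_inner_symm v w]

theorem fderiv_inv_one_add_norm_sq_mul_im_inner_zero {V : Type*} [NormedAddCommGroup V]
    [InnerProductSpace ℂ V] (w u : V) :
    fderiv ℝ (fun v : V => (1 + ‖v‖ ^ 2)⁻¹ * (⟪v, w⟫).im) 0 u = (⟪u, w⟫).im := by
  rw [(hasFDerivAt_inv_one_add_norm_sq_mul_zero (hasFDerivAt_im_inner_left w 0)).fderiv]
  simp [Complex.im_inner_symm u w]

theorem curvature_local_formula_general
    {V : Type*} [NormedAddCommGroup V] [InnerProductSpace ℂ V]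
    (δv δw : V) :
    fderiv ℝ (fun v : V => (1 + ‖v‖ ^ 2)⁻¹ * (⟪v, δw⟫).im) 0 δv
      - fderiv ℝ (fun v : V => (1 + ‖v‖ ^ 2)⁻¹ * (⟪v, δv⟫).im) 0 δw
      = 2 * (⟪δv, δw⟫).im := by
  rw [fderiv_inv_one_add_norm_sq_mul_im_inner_zero, fderiv_inv_one_add_norm_sq_mul_im_inner_zero,
    Complex.im_inner_symm δw δv]
  ring

/-- In local coordinates at `v = 0`, the exterior derivative of the connection
1-form `α`, represented by `(v, δv) ↦ (1+‖v‖²)⁻¹ Im⟨v, δv⟩`, evaluated on the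
constant vector fields `δv, δw`, equals `2 Im⟨δv, δw⟩`. -/
theorem curvature_local_formula
    {V : Type*} [NormedAddCommGroup V] [InnerProductSpace ℂ V]
    (ψ δv δw : V) (hψ : ‖ψ‖ = 1)
    (hδv : (⟪ψ, δv⟫).re = 0) (hδw : (⟪ψ, δw⟫).re = 0) :
    fderiv ℝ (fun v : V => (1 + ‖v‖ ^ 2)⁻¹ * (⟪v, δw⟫).im) 0 δv
      - fderiv ℝ (fun v : V => (1 + ‖v‖ ^ 2)⁻¹ * (⟪v, δv⟫).im) 0 δw
      = 2 * (⟪δv, δw⟫).im :=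
  curvature_local_formula_general δv δw
end

section
/- With dρ a Lie algebra representation by skew-hermitian operators on a complex inner product space W and ψ a unit vector, the bilinear form ω_ψ(ξ,η) := 2 Im⟨dρ(ξ)ψ, dρ(η)ψ⟩ on g is a Lie algebra 2-cocycle: it is antisymmetric and satisfies ω_ψ([ξ,η],ζ) + ω_ψ([η,ζ],ξ) + ω_ψ([ζ,ξ],η) = 0. -/
open scoped ComplexInnerProductSpace

/-- The Kostant–Souriau form `ω_ψ(ξ,η) = 2 Im⟨dρ(ξ)ψ, dρ(η)ψ⟩` is an
antisymmetric Lie algebra 2-cocycle. -/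
theorem KS_form_is_two_cocycle
    {W : Type*} [NormedAddCommGroup W] [InnerProductSpace ℂ W]
    {g : Type*} [LieRing g] (dρ : g → W →ₗ[ℂ] W)
    (hrep : ∀ ξ η : g, dρ ⁅ξ, η⁆ = dρ ξ ∘ₗ dρ η - dρ η ∘ₗ dρ ξ)
    (hskew : ∀ (ξ : g) (φ χ : W), ⟪dρ ξ φ, χ⟫ = -⟪φ, dρ ξ χ⟫)
    (ψ : W) (hψ : ‖ψ‖ = 1) :
    (∀ ξ η : g, 2 * (⟪dρ ξ ψ, dρ η ψ⟫).im = -(2 * (⟪dρ η ψ, dρ ξ ψ⟫).im)) ∧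
    (∀ ξ η ζ : g,
      2 * (⟪dρ ⁅ξ, η⁆ ψ, dρ ζ ψ⟫).im + 2 * (⟪dρ ⁅η, ζ⁆ ψ, dρ ξ ψ⟫).im
        + 2 * (⟪dρ ⁅ζ, ξ⁆ ψ, dρ η ψ⟫).im = 0) := by
  have him : ∀ u v : W, (⟪u, v⟫).im = -(⟪v, u⟫).im := by
    intro u v
    rw [← inner_conj_symm v u, Complex.conj_im, neg_neg]
  constructor
  · intro ξ η
    rw [him]
    ring
  · intro ξ η ζ
    -- Expand each bracket term using hrep and hskew
    have key : ∀ a b c : g,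
        (⟪dρ ⁅a, b⁆ ψ, dρ c ψ⟫).im
          = (⟪dρ a ψ, dρ b (dρ c ψ)⟫).im - (⟪dρ b ψ, dρ a (dρ c ψ)⟫).im := by
      intro a b c
      rw [hrep]
      simp only [LinearMap.sub_apply, LinearMap.comp_apply, inner_sub_left,
        Complex.sub_im]
      rw [hskew a (dρ b ψ) (dρ c ψ), hskew b (dρ a ψ) (dρ c ψ)]
      simp only [Complex.neg_im, inner_neg_left]
      rw [him (dρ b ψ) (dρ a (dρ c ψ)), him (dρ a ψ) (dρ b (dρ c ψ))]
      ring
    have symm : ∀ a b c : g,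
        (⟪dρ a ψ, dρ b (dρ c ψ)⟫).im = (⟪dρ c ψ, dρ b (dρ a ψ)⟫).im := by
      intro a b c
      rw [him, hskew b (dρ c ψ) (dρ a ψ)]
      simp
    rw [key ξ η ζ, key η ζ ξ, key ζ ξ η,
      symm ζ η ξ, symm ξ ζ η, symm η ξ ζ]
    ring
end

section
/- For a unit vector ψ in a complex inner product space with derived representation dρ of a Lie algebra by skew-hermitian operators, the derivative of the momentum map, D_{[ψ]}μ(δv)(ξ) := 2 Re⟨i dρ(ξ)ψ, δv⟩ defined on δv with ⟨ψ, δv⟩ = 0, vanishes identically (for all ξ) if and only if dρ(ξ)ψ ∈ iℝψ for every ξ, i.e. the whole Lie algebra stabilises the ray [ψ]. -/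
open scoped ComplexInnerProductSpace

/-- The derivative of the momentum map, `D_{[ψ]}μ(δv)(ξ) = 2 Re⟨i dρ(ξ)ψ, δv⟩`
on `T_{[ψ]} = {δv : ⟨ψ,δv⟩ = 0}`, vanishes identically iff the whole Lie
algebra stabilises the ray `[ψ]`, i.e. `dρ(ξ)ψ ∈ iℝψ` for every `ξ`. -/
theorem momentum_derivative_vanishes_iff_ray_stabilised
    {W : Type*} [NormedAddCommGroup W] [InnerProductSpace ℂ W]
    {g : Type*} (dρ : g → W →ₗ[ℂ] W)
    (hskew : ∀ (ξ : g) (φ χ : W), ⟪dρ ξ φ, χ⟫ = -⟪φ, dρ ξ χ⟫)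
    (ψ : W) (hψ : ‖ψ‖ = 1) :
    (∀ δv : W, ⟪ψ, δv⟫ = 0 → ∀ ξ : g, 2 * (⟪Complex.I • dρ ξ ψ, δv⟫).re = 0)
      ↔ (∀ ξ : g, ∃ t : ℝ, dρ ξ ψ = (Complex.I * t) • ψ) := by
  have hψψ : ⟪ψ, ψ⟫ = 1 := by
    rw [inner_self_eq_norm_sq_to_K, hψ]; norm_num
  constructor
  · intro h ξ
    set w := dρ ξ ψ with hw
    set z := (⟪ψ, w⟫ : ℂ) with hz
    have hconj : (starRingEnd ℂ) z = -z := by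
      rw [hz, inner_conj_symm]
      exact hskew ξ ψ ψ
    have hre : z.re = 0 := by
      have := congrArg Complex.re hconj
      simp at this
      linarith
    set wp := w - z • ψ with hwp
    have horth : ⟪ψ, wp⟫ = 0 := by
      rw [hwp, inner_sub_right, inner_smul_right, hψψ]
      ring
    have horth2 : ⟪ψ, Complex.I • wp⟫ = 0 := by
      rw [inner_smul_right, horth]; ring
    have hkey := h (Complex.I • wp) horth2 ξ
    have hcalc : ⟪Complex.I • w, Complex.I • wp⟫ = ⟪wp, wp⟫ := by
      rw [inner_smul_left, inner_smul_right]
      have hww : ⟪w, wp⟫ = ⟪wp, wp⟫ := by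
        have : w = wp + z • ψ := by rw [hwp]; abel
        rw [this, inner_add_left, inner_smul_left]
        have : ⟪ψ, wp⟫ = 0 := horth
        rw [this]
        ring
      rw [hww, Complex.conj_I]
      ring_nf
      rw [Complex.I_sq]
      ring
    rw [hcalc] at hkey
    have hwp0 : wp = 0 := by
      have : (⟪wp, wp⟫ : ℂ).re = 0 := by linarith
      have h2 : (⟪wp, wp⟫ : ℂ) = 0 := by
        have him : (⟪wp, wp⟫ : ℂ).im = 0 := inner_self_im (𝕜 := ℂ) wp
        exact Complex.ext this him
      exact inner_self_eq_zero.mp h2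
    refine ⟨z.im, ?_⟩
    have hwz : w = z • ψ := by
      have h3 : w - z • ψ = 0 := by rw [← hwp]; exact hwp0
      exact sub_eq_zero.mp h3
    have hzval : z = Complex.I * z.im := by
      apply Complex.ext <;> simp [hre]
    show w = (Complex.I * z.im) • ψ
    rw [hwz, ← hzval]
  · intro h δv hδv ξ
    obtain ⟨t, ht⟩ := h ξ
    rw [ht, smul_smul, inner_smul_left, hδv]
    simp
end
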